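/- arXiv:1710.10388 — 5 statements merged into one kernel-verified Lean document; each statement's English description precedes it below -/
import Mathlib

section
/- Let B(π, r) = {σ ∈ S_n : d_KT(π, σ) ≤ r} for π ∈ S_n and r ∈ (0, (n choose 2)]. Then for every ε ∈ (0, r): n·log(r/(n+ε)) − 2n ≤ log N(B(π,r), ε) ≤ log D(B(π,r), ε) ≤ n·log((2n+2r)/ε) + 2n. -/
/-!
The Kendall tau distance is a right-invariant metric on `S_n`, so every ball of radius `ρ` has
the size of `B(1, ρ)`, the set of permutations with at most `⌊ρ⌋` inversions. The Lehmer code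
is a bijection from `S_n` onto the box `∏ᵢ [0, n - i)` that turns the number of inversions into
the coordinate sum. Stars and bars bounds the number of codes of sum `≤ m` by
`C(n + m, n) ≤ (e (n + m) / n)ⁿ`, and the sub-box `∏ᵢ [0, min (n - i) K)` with
`K = ⌊m / n⌋ + 1` shows there are at least `K^(n - K) K! ≥ Kⁿ e^(-K) ≥ (m / n)ⁿ e^(-m / n)`
of them, the last step because `xⁿ e^(-x)` increases on `[0, n]`. A maximal `ε`-packing is an
`ε`-cover, so `N ≤ D`, and comparing volumes, `|B(r)| ≤ N |B(ε)|` and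
`D |B(ε/2)| ≤ |B(r + ε/2)|`; the two volume estimates turn these into the stated bounds.
-/

open Finset

/-- Kendall tau distance between two permutations of `Fin n`. -/
def dKT (n : ℕ) (π σ : Equiv.Perm (Fin n)) : ℕ :=
  (Finset.univ.filter fun q : Fin n × Fin n => σ q.1 < σ q.2 ∧ π q.2 < π q.1).card

/-- The ball of radius `r` around `π` in the Kendall tau distance. -/
noncomputable def ballKT (n : ℕ) (π : Equiv.Perm (Fin n)) (r : ℝ) :
    Finset (Equiv.Perm (Fin n)) :=
  Finset.univ.filter fun σ => (dKT n π σ : ℝ) ≤ r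

/-- The `ε`-covering number of `S ⊆ S_n` w.r.t. the Kendall tau distance:
the minimal cardinality of a set `T ⊆ S_n` such that every `σ ∈ S` is within
distance `ε` of some `τ ∈ T`. -/
noncomputable def coverNum (n : ℕ) (S : Finset (Equiv.Perm (Fin n))) (ε : ℝ) : ℕ :=
  sInf {k : ℕ | ∃ T : Finset (Equiv.Perm (Fin n)), T.card = k ∧
    ∀ σ ∈ S, ∃ τ ∈ T, (dKT n σ τ : ℝ) ≤ ε}

/-- The `ε`-packing number of `S ⊆ S_n` w.r.t. the Kendall tau distance:
the maximal cardinality of a subset `P ⊆ S` whose distinct elements are at pairwise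
distance greater than `ε`. -/
noncomputable def packNum (n : ℕ) (S : Finset (Equiv.Perm (Fin n))) (ε : ℝ) : ℕ :=
  sSup {k : ℕ | ∃ P : Finset (Equiv.Perm (Fin n)), P ⊆ S ∧ P.card = k ∧
    ∀ π ∈ P, ∀ σ ∈ P, π ≠ σ → ε < (dKT n π σ : ℝ)}

open scoped Nat

section

variable {n : ℕ}

lemma dKT_self (π : Equiv.Perm (Fin n)) : dKT n π π = 0 := by
  simp only [dKT, card_eq_zero, filter_eq_empty_iff]
  exact fun q _ h => lt_asymm h.1 h.2

lemma dKT_comm (π σ : Equiv.Perm (Fin n)) : dKT n π σ = dKT n σ π :=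
  card_equiv (Equiv.prodComm _ _) fun q => by simp [and_comm]

lemma dKT_triangle (π ρ σ : Equiv.Perm (Fin n)) : dKT n π σ ≤ dKT n π ρ + dKT n ρ σ := by
  refine (card_le_card fun q hq => ?_).trans (card_union_le _ _)
  simp only [mem_filter, mem_univ, true_and, mem_union] at hq ⊢
  rcases lt_trichotomy (ρ q.1) (ρ q.2) with h | h | h
  · exact Or.inl ⟨h, hq.2⟩
  · exact absurd hq.1 (by rw [ρ.injective h]; exact lt_irrefl _)
  · exact Or.inr ⟨hq.1, h⟩

lemma dKT_mul_right (π σ τ : Equiv.Perm (Fin n)) : dKT n (π * τ) (σ * τ) = dKT n π σ :=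
  card_equiv (Equiv.prodCongr τ τ) fun q => by rw [mem_filter, mem_filter]; simp

lemma mem_ballKT {π σ : Equiv.Perm (Fin n)} {ρ : ℝ} :
    σ ∈ ballKT n π ρ ↔ (dKT n π σ : ℝ) ≤ ρ := by
  simp [ballKT]

lemma mem_ballKT_self (π : Equiv.Perm (Fin n)) {ρ : ℝ} (hρ : 0 ≤ ρ) : π ∈ ballKT n π ρ := by
  simpa [mem_ballKT, dKT_self] using hρ

lemma card_ballKT_eq_card_ballKT_one (π : Equiv.Perm (Fin n)) (ρ : ℝ) :
    #(ballKT n π ρ) = #(ballKT n 1 ρ) :=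
  card_equiv (Equiv.mulRight π⁻¹) fun σ => by
    rw [mem_ballKT, mem_ballKT, Equiv.coe_mulRight, ← dKT_mul_right 1 (σ * π⁻¹) π]
    simp

def lehmerCode (σ : Equiv.Perm (Fin n)) (i : Fin n) : ℕ := #{j | i < j ∧ σ j < σ i}

lemma sum_lehmerCode (σ : Equiv.Perm (Fin n)) : ∑ i, lehmerCode σ i = dKT n 1 σ := by
  rw [dKT, card_filter, Fintype.sum_prod_type, sum_comm]
  simp only [lehmerCode, card_filter, Equiv.Perm.one_apply, and_comm]

lemma lehmerCode_lt (σ : Equiv.Perm (Fin n)) (i : Fin n) : lehmerCode σ i < n - i := by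
  have : lehmerCode σ i ≤ #(Ioi i) := card_le_card fun j hj => by simpa using (mem_filter.1 hj).2.1
  rw [Fin.card_Ioi] at this
  omega

lemma lehmerCode_eq_card_Iio_sdiff (σ : Equiv.Perm (Fin n)) (i : Fin n) :
    lehmerCode σ i = #(Iio (σ i) \ (Iio i).image σ) := by
  rw [lehmerCode, ← card_image_of_injective _ σ.injective]
  congr 1
  ext v
  simp only [mem_image, mem_filter, mem_univ, true_and, mem_sdiff, mem_Iio, not_exists, not_and]
  constructor
  · rintro ⟨j, ⟨hij, hj⟩, rfl⟩
    exact ⟨hj, fun k hk h => (σ.injective h ▸ hk).not_gt hij⟩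
  · rintro ⟨hv, hv'⟩
    refine ⟨σ.symm v, ⟨?_, by simpa⟩, by simp⟩
    refine lt_of_le_of_ne (not_lt.1 fun h => hv' _ h (by simp)) fun h => ?_
    simp [h] at hv

lemma strictMonoOn_card_Iio_sdiff {α : Type*} [Preorder α] [LocallyFiniteOrderBot α]
    [DecidableEq α] (A : Finset α) : StrictMonoOn (fun v => #(Iio v \ A)) (↑A)ᶜ := by
  intro v hv w _ hvw
  refine card_lt_card ((ssubset_iff_of_subset (sdiff_subset_sdiff (Iio_subset_Iio hvw.le)
    subset_rfl)).2 ⟨v, ?_, ?_⟩) <;> simp_all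

-- `σ i` is the unique value outside `σ '' Iio i` with exactly `lehmerCode σ i` smaller values
-- outside that set, so `σ` is recovered from its code by strong induction on `i`.
lemma lehmerCode_injective : Function.Injective (lehmerCode (n := n)) := by
  intro σ τ h
  ext i : 1
  induction i using WellFoundedLT.induction with
  | _ i ih =>
  have hA : (Iio i).image σ = (Iio i).image τ := image_congr fun j hj => ih j (mem_Iio.1 hj)
  refine (strictMonoOn_card_Iio_sdiff ((Iio i).image σ)).injOn ?_ ?_ ?_
  · simp
  · simp [hA]
  · simpa [lehmerCode_eq_card_Iio_sdiff, hA] using congrFun h i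

def lehmerBox (n : ℕ) : Finset (Fin n → ℕ) := Fintype.piFinset fun i => range (n - i)

lemma card_lehmerBox : #(lehmerBox n) = n ! := by
  rw [lehmerBox, Fintype.card_piFinset]
  simp only [card_range]
  rw [Fin.prod_univ_eq_prod_range (fun i => n - i), ← Nat.descFactorial_eq_prod_range,
    Nat.descFactorial_self]

lemma image_lehmerCode : univ.image lehmerCode = lehmerBox n := by
  refine eq_of_subset_of_card_le (image_subset_iff.2 fun σ _ =>
    Fintype.mem_piFinset.2 fun i => mem_range.2 (lehmerCode_lt σ i)) ?_
  rw [card_lehmerBox, card_image_of_injective _ lehmerCode_injective, card_univ,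
    Fintype.card_perm, Fintype.card_fin]

lemma card_ballKT_eq_card_lehmerBox_filter (π : Equiv.Perm (Fin n)) {ρ : ℝ} (hρ : 0 ≤ ρ) :
    #(ballKT n π ρ) = #{b ∈ lehmerBox n | ∑ i, b i ≤ ⌊ρ⌋₊} := by
  rw [card_ballKT_eq_card_ballKT_one, ← image_lehmerCode, filter_image,
    card_image_of_injective _ lehmerCode_injective, ballKT]
  congr 1
  refine filter_congr fun σ _ => ?_
  rw [sum_lehmerCode, Nat.le_floor_iff hρ]

lemma card_filter_sum_le_le_choose {ι : Type*} [Fintype ι] [DecidableEq ι]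
    (s : Finset (ι → ℕ)) (m : ℕ) :
    #{b ∈ s | ∑ i, b i ≤ m} ≤ (Fintype.card ι + m).choose m := by
  let F : (ι → ℕ) → Multiset (Option ι) :=
    fun b => ∑ i, b i • {some i} + (m - ∑ i, b i) • {none}
  have count_F (b : ι → ℕ) (i : ι) : (F b).count (some i) = b i := by
    simp [F, Multiset.count_sum', Multiset.count_singleton]
  have card_F (b : ι → ℕ) (hb : ∑ i, b i ≤ m) : Multiset.card (F b) = m := by
    simp [F]
    omega
  have F_inj : Function.Injective F := fun b b' h => funext fun i => by
    rw [← count_F b, ← count_F b', h]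
  calc #{b ∈ s | ∑ i, b i ≤ m} = #({b ∈ s | ∑ i, b i ≤ m}.image F) :=
        (card_image_of_injective _ F_inj).symm
    _ ≤ #(univ.image ((↑) : Sym (Option ι) m → Multiset (Option ι))) :=
        card_le_card <| image_subset_iff.2 fun b hb =>
          mem_image.2 ⟨⟨F b, card_F b (mem_filter.1 hb).2⟩, mem_univ _, rfl⟩
    _ ≤ Fintype.card (Sym (Option ι) m) := card_image_le
    _ = (Fintype.card ι + m).choose m := by
        rw [Sym.card_sym_eq_choose, Fintype.card_option, Nat.add_right_comm,
          Nat.add_sub_cancel]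

lemma choose_add_le_pow_mul_exp_div (n m : ℕ) :
    ((n + m).choose m : ℝ) ≤ (n + m) ^ n * Real.exp n / n ^ n := by
  have hfact := Real.pow_div_factorial_le_exp _ (Nat.cast_nonneg n) n
  have hpow : (0 : ℝ) < (n : ℝ) ^ n := by
    rcases Nat.eq_zero_or_pos n with rfl | hn
    · simp
    · positivity
  calc ((n + m).choose m : ℝ) = ((n + m).choose n : ℝ) := by rw [Nat.choose_symm_add]
    _ ≤ (n + m) ^ n / n ! := by exact_mod_cast Nat.choose_le_pow_div n (n + m)
    _ = (n + m) ^ n / n ^ n * (n ^ n / n !) := by field_simp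
    _ ≤ (n + m) ^ n / n ^ n * Real.exp n := by gcongr
    _ = (n + m) ^ n * Real.exp n / n ^ n := by ring

lemma card_ballKT_le (π : Equiv.Perm (Fin n)) {ρ : ℝ} (hρ : 0 ≤ ρ) :
    (#(ballKT n π ρ) : ℝ) ≤ (n + ρ) ^ n * Real.exp n / n ^ n := by
  rw [card_ballKT_eq_card_lehmerBox_filter π hρ]
  calc (#{b ∈ lehmerBox n | ∑ i, b i ≤ ⌊ρ⌋₊} : ℝ) ≤ ((n + ⌊ρ⌋₊).choose ⌊ρ⌋₊ : ℕ) := by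
        exact_mod_cast Fintype.card_fin n ▸ card_filter_sum_le_le_choose _ _
    _ ≤ (n + ⌊ρ⌋₊) ^ n * Real.exp n / n ^ n := by
        exact_mod_cast choose_add_le_pow_mul_exp_div n ⌊ρ⌋₊
    _ ≤ (n + ρ) ^ n * Real.exp n / n ^ n := by
        gcongr
        exact Nat.floor_le hρ

lemma prod_min_sub_eq_pow_mul_factorial {K : ℕ} (hK : K ≤ n) :
    ∏ i : Fin n, min (n - i) K = K ^ (n - K) * K ! := by
  obtain ⟨d, rfl⟩ := Nat.exists_eq_add_of_le hK
  rw [Fin.prod_univ_eq_prod_range (fun i => min (K + d - i) K), add_comm K d, prod_range_add,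
    Nat.add_sub_cancel, ← Nat.descFactorial_self, Nat.descFactorial_eq_prod_range]
  congr 1
  · rw [prod_congr rfl fun i hi => (by have := mem_range.1 hi; omega : min (d + K - i) K = K)]
    simp
  · exact prod_congr rfl fun i _ => by omega

lemma pow_mul_factorial_le_card_lehmerBox_filter {K m : ℕ} (hK : K ≤ n)
    (hm : n * (K - 1) ≤ m) : K ^ (n - K) * K ! ≤ #{b ∈ lehmerBox n | ∑ i, b i ≤ m} := by
  rw [← prod_min_sub_eq_pow_mul_factorial hK]
  have hsub : Fintype.piFinset (fun i : Fin n => range (min (n - i) K)) ⊆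
      {b ∈ lehmerBox n | ∑ i, b i ≤ m} := by
    intro b hb
    simp only [Fintype.mem_piFinset, mem_range, lt_min_iff] at hb
    refine mem_filter.2 ⟨Fintype.mem_piFinset.2 fun i => mem_range.2 (hb i).1, ?_⟩
    calc ∑ i, b i ≤ ∑ _i : Fin n, (K - 1) := sum_le_sum fun i _ => by have := (hb i).2; omega
      _ = n * (K - 1) := by simp
      _ ≤ m := hm
  simpa [Fintype.card_piFinset] using card_le_card hsub

lemma pow_mul_exp_neg_le_pow_sub_mul_factorial {K : ℕ} (hK : K ≤ n) :
    (K : ℝ) ^ n * Real.exp (-K) ≤ K ^ (n - K) * K ! := by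
  have h : (K : ℝ) ^ K * Real.exp (-K) ≤ K ! := by
    have := Real.pow_div_factorial_le_exp _ (Nat.cast_nonneg K) K
    rw [div_le_iff₀ (by positivity)] at this
    rw [Real.exp_neg, ← div_eq_mul_inv, div_le_iff₀ (Real.exp_pos _)]
    exact this.trans_eq (mul_comm _ _)
  calc (K : ℝ) ^ n * Real.exp (-K) = K ^ (n - K) * (K ^ K * Real.exp (-K)) := by
        rw [← mul_assoc, ← pow_add, Nat.sub_add_cancel hK]
    _ ≤ K ^ (n - K) * K ! := by gcongr

lemma pow_mul_exp_neg_le_of_le {x y : ℝ} (hx : 0 ≤ x) (hxy : x ≤ y) (hy : y ≤ n) :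
    x ^ n * Real.exp (-x) ≤ y ^ n * Real.exp (-y) := by
  rcases (hx.trans hxy).eq_or_lt with hy0 | hy0
  · obtain rfl : x = y := le_antisymm hxy (hy0 ▸ hx)
    rfl
  have hratio : (x / y) ^ n ≤ Real.exp (x - y) := by
    calc (x / y) ^ n ≤ Real.exp (x / y - 1) ^ n := by
          gcongr
          linarith [Real.add_one_le_exp (x / y - 1)]
      _ = Real.exp (n * (x / y - 1)) := (Real.exp_nat_mul _ _).symm
      _ ≤ Real.exp (x - y) := by
          gcongr
          rw [div_sub_one hy0.ne', mul_div_assoc', div_le_iff₀ hy0]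
          nlinarith
  calc x ^ n * Real.exp (-x) = y ^ n * (x / y) ^ n * Real.exp (-x) := by
        rw [div_pow]
        field_simp
    _ ≤ y ^ n * Real.exp (x - y) * Real.exp (-x) := by gcongr
    _ = y ^ n * Real.exp (-y) := by
        rw [mul_assoc, ← Real.exp_add]
        ring_nf

lemma card_ballKT_ge (π : Equiv.Perm (Fin n)) (hn : n ≠ 0) {ρ : ℝ} (hρ0 : 0 ≤ ρ)
    (hρ : ρ ≤ n.choose 2) : (ρ / n) ^ n * Real.exp (-(ρ / n)) ≤ #(ballKT n π ρ) := by
  set K := ⌊ρ⌋₊ / n + 1 with hK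
  have hKn : K ≤ n := by
    have h1 : ⌊ρ⌋₊ ≤ n * (n - 1) := (Nat.floor_le_of_le hρ).trans <|
      (Nat.choose_two_right n).trans_le (Nat.div_le_self _ _)
    have h2 := Nat.div_le_of_le_mul h1
    omega
  have hρK : ρ / n ≤ K := by
    have h1 : ⌊ρ⌋₊ < n * K := Nat.lt_mul_div_succ _ (Nat.pos_of_ne_zero hn)
    have h2 : ρ < ⌊ρ⌋₊ + 1 := Nat.lt_floor_add_one ρ
    rw [div_le_iff₀ (by positivity), mul_comm]
    have h3 : (⌊ρ⌋₊ : ℝ) + 1 ≤ n * K := by exact_mod_cast h1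
    linarith
  calc (ρ / n) ^ n * Real.exp (-(ρ / n)) ≤ (K : ℝ) ^ n * Real.exp (-K) :=
        pow_mul_exp_neg_le_of_le (by positivity) hρK (by exact_mod_cast hKn)
    _ ≤ K ^ (n - K) * K ! := pow_mul_exp_neg_le_pow_sub_mul_factorial hKn
    _ ≤ #(ballKT n π ρ) := by
        rw [card_ballKT_eq_card_lehmerBox_filter π hρ0]
        exact_mod_cast pow_mul_factorial_le_card_lehmerBox_filter hKn (by simp [hK, Nat.mul_div_le])

section CoveringPacking

variable (S : Finset (Equiv.Perm (Fin n))) {ε : ℝ}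

lemma exists_cover_card_eq_coverNum (hε : 0 ≤ ε) :
    ∃ T : Finset (Equiv.Perm (Fin n)), #T = coverNum n S ε ∧
      ∀ σ ∈ S, ∃ τ ∈ T, (dKT n σ τ : ℝ) ≤ ε :=
  Nat.sInf_mem (s := {k | ∃ T : Finset (Equiv.Perm (Fin n)), T.card = k ∧
      ∀ σ ∈ S, ∃ τ ∈ T, (dKT n σ τ : ℝ) ≤ ε})
    ⟨_, univ, rfl, fun σ _ => ⟨σ, mem_univ σ, by simpa [dKT_self] using hε⟩⟩

lemma coverNum_pos (hS : S.Nonempty) (hε : 0 ≤ ε) : 0 < coverNum n S ε := by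
  obtain ⟨T, hT, hcover⟩ := exists_cover_card_eq_coverNum S hε
  obtain ⟨τ, hτ, -⟩ := hcover _ hS.choose_spec
  exact hT ▸ card_pos.2 ⟨τ, hτ⟩

lemma packNum_bddAbove (ε : ℝ) : BddAbove {k : ℕ | ∃ P : Finset (Equiv.Perm (Fin n)),
    P ⊆ S ∧ P.card = k ∧ ∀ π ∈ P, ∀ σ ∈ P, π ≠ σ → ε < (dKT n π σ : ℝ)} :=
  ⟨_, by rintro _ ⟨P, -, rfl, -⟩; exact card_le_univ P⟩

lemma exists_packing_card_eq_packNum (ε : ℝ) :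
    ∃ P ⊆ S, #P = packNum n S ε ∧ ∀ π ∈ P, ∀ σ ∈ P, π ≠ σ → ε < (dKT n π σ : ℝ) := by
  refine Nat.sSup_mem ?_ (packNum_bddAbove S ε)
  exact ⟨0, ∅, empty_subset _, card_empty, by simp⟩

lemma card_le_packNum {P : Finset (Equiv.Perm (Fin n))} (hPS : P ⊆ S)
    (hsep : ∀ π ∈ P, ∀ σ ∈ P, π ≠ σ → ε < (dKT n π σ : ℝ)) : #P ≤ packNum n S ε :=
  le_csSup (packNum_bddAbove S ε) ⟨P, hPS, rfl, hsep⟩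

lemma coverNum_le_packNum (hε : 0 ≤ ε) : coverNum n S ε ≤ packNum n S ε := by
  obtain ⟨P, hPS, hP, hsep⟩ := exists_packing_card_eq_packNum S ε
  suffices hcover : ∀ σ ∈ S, ∃ τ ∈ P, (dKT n σ τ : ℝ) ≤ ε from hP ▸ Nat.sInf_le ⟨P, rfl, hcover⟩
  by_contra! ⟨σ, hσS, hfar⟩
  have hσP : σ ∉ P := fun h => by
    have := hfar σ h
    simp only [dKT_self, CharP.cast_eq_zero] at this
    linarith
  have hsep_insert : ∀ π ∈ insert σ P, ∀ τ ∈ insert σ P, π ≠ τ → ε < (dKT n π τ : ℝ) := by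
    simp only [mem_insert, forall_eq_or_imp]
    refine ⟨⟨fun h => (h rfl).elim, fun τ hτ _ => hfar τ hτ⟩, fun π hπ => ⟨fun _ => ?_, hsep π hπ⟩⟩
    rw [dKT_comm]
    exact hfar π hπ
  have := card_le_packNum S (insert_subset hσS hPS) hsep_insert
  rw [card_insert_of_notMem hσP] at this
  omega

lemma card_le_coverNum_mul (hε : 0 ≤ ε) : #S ≤ coverNum n S ε * #(ballKT n 1 ε) := by
  obtain ⟨T, hT, hcover⟩ := exists_cover_card_eq_coverNum S hε
  calc #S ≤ #(T.biUnion fun τ => ballKT n τ ε) := card_le_card fun σ hσ => by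
        obtain ⟨τ, hτ, hd⟩ := hcover σ hσ
        exact mem_biUnion.2 ⟨τ, hτ, mem_ballKT.2 (dKT_comm τ σ ▸ hd)⟩
    _ ≤ ∑ τ ∈ T, #(ballKT n τ ε) := card_biUnion_le
    _ = coverNum n S ε * #(ballKT n 1 ε) := by simp [card_ballKT_eq_card_ballKT_one, hT]

lemma packNum_mul_card_ballKT_le {π : Equiv.Perm (Fin n)} {r : ℝ} (hS : S ⊆ ballKT n π r) :
    packNum n S ε * #(ballKT n 1 (ε / 2)) ≤ #(ballKT n π (r + ε / 2)) := by
  obtain ⟨P, hPS, hP, hsep⟩ := exists_packing_card_eq_packNum S ε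
  have hdisj : (P : Set (Equiv.Perm (Fin n))).PairwiseDisjoint fun σ => ballKT n σ (ε / 2) := by
    intro σ₁ h₁ σ₂ h₂ hne
    refine disjoint_left.2 fun τ hτ₁ hτ₂ => ?_
    rw [mem_ballKT] at hτ₁ hτ₂
    have htri : (dKT n σ₁ σ₂ : ℝ) ≤ dKT n σ₁ τ + dKT n σ₂ τ := by
      exact_mod_cast dKT_comm σ₂ τ ▸ dKT_triangle σ₁ τ σ₂
    linarith [hsep σ₁ h₁ σ₂ h₂ hne]
  calc packNum n S ε * #(ballKT n 1 (ε / 2)) = #(P.biUnion fun σ => ballKT n σ (ε / 2)) := by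
        rw [card_biUnion hdisj]
        simp [card_ballKT_eq_card_ballKT_one, hP]
    _ ≤ #(ballKT n π (r + ε / 2)) := card_le_card fun τ hτ => by
        obtain ⟨σ, hσ, hτσ⟩ := mem_biUnion.1 hτ
        have hπσ := mem_ballKT.1 (hS (hPS hσ))
        have htri : (dKT n π τ : ℝ) ≤ dKT n π σ + dKT n σ τ := by
          exact_mod_cast dKT_triangle π σ τ
        exact mem_ballKT.2 (by linarith [mem_ballKT.1 hτσ])

end CoveringPacking

lemma cast_choose_two_le (n : ℕ) : (n.choose 2 : ℝ) ≤ n ^ 2 / 2 := by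
  simpa using Nat.choose_le_pow_div (α := ℝ) 2 n

lemma coverNum_ballKT_ge (π : Equiv.Perm (Fin n)) (hn : n ≠ 0) {r ε : ℝ} (hr0 : 0 ≤ r)
    (hr : r ≤ n.choose 2) (hε : 0 ≤ ε) :
    (r / (n + ε)) ^ n * Real.exp (-(2 * n)) ≤ coverNum n (ballKT n π r) ε := by
  have hn' : (0 : ℝ) < n := by positivity
  have hrn : r / n ≤ n := by
    rw [div_le_iff₀ hn']
    nlinarith [cast_choose_two_le n]
  have hBε : (0 : ℝ) < #(ballKT n 1 ε) := by exact_mod_cast card_pos.2 ⟨1, mem_ballKT_self 1 hε⟩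
  refine le_of_mul_le_mul_right ?_ hBε
  calc (r / (n + ε)) ^ n * Real.exp (-(2 * n)) * #(ballKT n 1 ε)
      ≤ (r / (n + ε)) ^ n * Real.exp (-(2 * n)) * ((n + ε) ^ n * Real.exp n / n ^ n) := by
        gcongr
        exact card_ballKT_le 1 hε
    _ = (r / n) ^ n * Real.exp (-n) := by
        rw [div_pow, div_pow, show -(n : ℝ) = -(2 * n) + n by ring, Real.exp_add]
        field_simp
    _ ≤ (r / n) ^ n * Real.exp (-(r / n)) := by gcongr
    _ ≤ #(ballKT n π r) := card_ballKT_ge π hn hr0 hr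
    _ ≤ coverNum n (ballKT n π r) ε * #(ballKT n 1 ε) := by
        exact_mod_cast card_le_coverNum_mul _ hε

lemma packNum_ballKT_le (π : Equiv.Perm (Fin n)) (hn : n ≠ 0) {r ε : ℝ} (hε : 0 < ε)
    (hεr : ε ≤ r) (hr : r ≤ n.choose 2) :
    (packNum n (ballKT n π r) ε : ℝ) ≤
      ((2 * n + 2 * r + ε) / ε) ^ n * Real.exp (n + ε / 2 / n) := by
  have hlow := card_ballKT_ge 1 hn (by positivity : 0 ≤ ε / 2) (by linarith)
  have hup := card_ballKT_le π (by linarith : 0 ≤ r + ε / 2)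
  have hpack : (packNum n (ballKT n π r) ε : ℝ) * #(ballKT n 1 (ε / 2)) ≤
      #(ballKT n π (r + ε / 2)) := by
    exact_mod_cast packNum_mul_card_ballKT_le _ subset_rfl
  calc (packNum n (ballKT n π r) ε : ℝ)
      ≤ (n + (r + ε / 2)) ^ n * Real.exp n / n ^ n /
          ((ε / 2 / n) ^ n * Real.exp (-(ε / 2 / n))) := by
        rw [le_div_iff₀ (by positivity)]
        exact (mul_le_mul_of_nonneg_left hlow (by positivity)).trans (hpack.trans hup)
    _ = ((2 * n + 2 * r + ε) / ε) ^ n * Real.exp (n + ε / 2 / n) := by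
        rw [Real.exp_add, Real.exp_neg, div_pow, div_pow, div_pow]
        field_simp
        rw [← mul_pow]
        ring

lemma add_div_pow_mul_exp_le {a ε : ℝ} (hε : 0 < ε) (hεa : 2 * ε ≤ a) (hεn : ε ≤ n ^ 2 / 2) :
    ((a + ε) / ε) ^ n * Real.exp (n + ε / 2 / n) ≤ (a / ε) ^ n * Real.exp (2 * n) := by
  have hn : (0 : ℝ) < n := (Nat.cast_nonneg n).lt_of_ne fun h => by
    rw [← h] at hεn
    linarith
  have ha : 0 < a := by linarith
  calc ((a + ε) / ε) ^ n * Real.exp (n + ε / 2 / n)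
      ≤ (a / ε * Real.exp (ε / a)) ^ n * Real.exp (n + ε / 2 / n) := by
        gcongr
        rw [show (a + ε) / ε = a / ε * (ε / a + 1) by field_simp; ring]
        gcongr
        exact Real.add_one_le_exp _
    _ = (a / ε) ^ n * Real.exp (n * (ε / a) + (n + ε / 2 / n)) := by
        rw [mul_pow, ← Real.exp_nat_mul, mul_assoc, ← Real.exp_add]
    _ ≤ (a / ε) ^ n * Real.exp (2 * n) := by
        have h1 : ε / a ≤ 1 / 2 := by rw [div_le_iff₀ ha]; linarith
        have h2 : ε / 2 / n ≤ n / 2 := by rw [div_le_iff₀ hn]; nlinarith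
        gcongr
        nlinarith

end

/-- **Proposition 3 (metric entropy of Kendall tau balls).** For `r ∈ (0, (n choose 2)]`
and `ε ∈ (0, r)`,
`n log(r/(n+ε)) - 2n ≤ log N(B(π,r), ε) ≤ log D(B(π,r), ε) ≤ n log((2n+2r)/ε) + 2n`. -/
theorem metric_entropy_ball (n : ℕ) (π : Equiv.Perm (Fin n)) (r ε : ℝ)
    (hr0 : 0 < r) (hr : r ≤ (n.choose 2 : ℝ)) (hε0 : 0 < ε) (hεr : ε < r) :
    (n : ℝ) * Real.log (r / ((n : ℝ) + ε)) - 2 * n ≤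
        Real.log (coverNum n (ballKT n π r) ε) ∧
      Real.log (coverNum n (ballKT n π r) ε) ≤ Real.log (packNum n (ballKT n π r) ε) ∧
      Real.log (packNum n (ballKT n π r) ε) ≤
        (n : ℝ) * Real.log ((2 * (n : ℝ) + 2 * r) / ε) + 2 * n := by
  have hn : n ≠ 0 := by
    rintro rfl
    simp at hr
    linarith
  have hN : (0 : ℝ) < coverNum n (ballKT n π r) ε := by
    exact_mod_cast coverNum_pos _ ⟨π, mem_ballKT_self π hr0.le⟩ hε0.le
  have hND : (coverNum n (ballKT n π r) ε : ℝ) ≤ packNum n (ballKT n π r) ε := by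
    exact_mod_cast coverNum_le_packNum _ hε0.le
  refine ⟨?_, Real.log_le_log hN hND, ?_⟩
  · calc (n : ℝ) * Real.log (r / (n + ε)) - 2 * n
        = Real.log ((r / (n + ε)) ^ n * Real.exp (-(2 * n))) := by
          rw [Real.log_mul (by positivity) (Real.exp_pos _).ne', Real.log_pow, Real.log_exp]
          ring
      _ ≤ Real.log (coverNum n (ballKT n π r) ε) :=
          Real.log_le_log (by positivity) (coverNum_ballKT_ge π hn hr0.le hr hε0.le)
  · have hεn : ε ≤ n ^ 2 / 2 := by linarith [cast_choose_two_le n]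
    calc Real.log (packNum n (ballKT n π r) ε)
        ≤ Real.log (((2 * n + 2 * r) / ε) ^ n * Real.exp (2 * n)) :=
          Real.log_le_log (hN.trans_le hND) <| (packNum_ballKT_le π hn hε0 hεr.le hr).trans
            (add_div_pow_mul_exp_le hε0 (by linarith) hεn)
      _ = n * Real.log ((2 * n + 2 * r) / ε) + 2 * n := by
          rw [Real.log_mul (by positivity) (Real.exp_pos _).ne', Real.log_pow, Real.log_exp]
end

section
/- Let π ∈ S_n and let r be an integer with 1 ≤ r < n/2. Then log N(B(π, r), r/4) ≥ (r/5)·log(n/r), where B(π, r) = {σ ∈ S_n : d_KT(π, σ) ≤ r}. -/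
open Finset

/-!
The Lehmer code `c i = #{j > i | σ j < σ i}` is a bijection from the permutations of `Fin n` onto
the vectors with `c i < n - i`, and it turns the number of inversions into `∑ i, c i`. Hence a
Kendall tau ball of integer radius `k` has at least `C(n - 1, k)` elements (the 0/1 codes on the
first `n - 1` coordinates) and at most `C(n + k, k)` (stars and bars). The balls of radius `r / 4`
around an `r / 4`-cover of `B(π, r)` cover it, so `N ≥ C(n - 1, r) / C(n + q, q)` with
`q = ⌊r / 4⌋`. Pairing the factors of the falling factorials bounds this ratio below by
`((n - 1) / r) ^ (r - q) / 2 ^ q`, and as `(n - 1) / r ≥ 2` its logarithm is at least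
`(r / 5) log (n / r)`.
-/

open Equiv
open scoped Nat

namespace KendallTau

theorem descFactorial_mul_pow_le {a b : ℕ} (hab : a ≤ b) (k : ℕ) :
    a.descFactorial k * b ^ k ≤ b.descFactorial k * a ^ k := by
  induction k with
  | zero => simp
  | succ k ih =>
    have hfactor : (a - k) * b ≤ (b - k) * a := by
      rw [Nat.sub_mul, Nat.sub_mul, mul_comm b a]
      exact Nat.sub_le_sub_left (Nat.mul_le_mul_left k hab) _
    calc a.descFactorial (k + 1) * b ^ (k + 1)
        = ((a - k) * b) * (a.descFactorial k * b ^ k) := by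
          rw [Nat.descFactorial_succ, pow_succ]; ring
      _ ≤ ((b - k) * a) * (b.descFactorial k * a ^ k) := Nat.mul_le_mul hfactor ih
      _ = b.descFactorial (k + 1) * a ^ (k + 1) := by
          rw [Nat.descFactorial_succ, pow_succ]; ring

theorem descFactorial_le_two_pow_mul {M m k : ℕ} (h : M + k ≤ 2 * m + 1) :
    M.descFactorial k ≤ 2 ^ k * m.descFactorial k := by
  induction k with
  | zero => simp
  | succ k ih =>
    calc M.descFactorial (k + 1) = (M - k) * M.descFactorial k := Nat.descFactorial_succ M k
      _ ≤ (2 * (m - k)) * (2 ^ k * m.descFactorial k) := Nat.mul_le_mul (by omega) (ih (by omega))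
      _ = 2 ^ (k + 1) * m.descFactorial (k + 1) := by rw [Nat.descFactorial_succ, pow_succ]; ring

theorem card_le_choose_of_sum_le {ι : Type*} [Fintype ι] {s : Finset (ι → ℕ)} {k : ℕ}
    (hs : ∀ c ∈ s, ∑ i, c i ≤ k) : #s ≤ (Fintype.card ι + k).choose k := by
  classical
  -- stars and bars, with the slack `k - ∑ i, c i` stored at `none`
  calc #s ≤ #((univ : Finset (Option ι)).finsuppAntidiag k) :=
        card_le_card_of_injOn
          (fun c => Finsupp.equivFunOnFinite.symm fun o => o.elim (k - ∑ i, c i) c) ?_ ?_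
    _ = _ := by simp [card_finsuppAntidiag_nat_eq_choose]
  · intro c hc
    refine mem_finsuppAntidiag.2 ⟨?_, subset_univ _⟩
    simp only [Finsupp.equivFunOnFinite_symm_apply_apply, Fintype.sum_option, Option.elim_none,
      Option.elim_some]
    exact Nat.sub_add_cancel (hs c hc)
  · intro c _ c' _ h
    funext i
    simpa using DFunLike.congr_fun h (some i)

variable {n : ℕ}

theorem dKT_self (σ : Perm (Fin n)) : dKT n σ σ = 0 := by
  simp only [dKT, card_eq_zero, filter_eq_empty_iff]
  exact fun q _ h => lt_asymm h.1 h.2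

theorem dKT_comm (π σ : Perm (Fin n)) : dKT n π σ = dKT n σ π :=
  card_equiv (prodComm _ _) fun q => by simp [and_comm]

theorem dKT_mul_right (π σ ρ : Perm (Fin n)) : dKT n (π * ρ) (σ * ρ) = dKT n π σ := by
  unfold dKT
  exact card_equiv (ρ.prodCongr ρ) fun q => by rw [mem_filter]; simp

theorem card_ballKT (π : Perm (Fin n)) (R : ℝ) : #(ballKT n π R) = #(ballKT n 1 R) :=
  card_equiv (Equiv.mulRight π⁻¹) fun σ => by
    simp [ballKT, ← dKT_mul_right π σ π⁻¹]

theorem card_le_coverNum_mul_card_ballKT (S : Finset (Perm (Fin n))) {ε : ℝ} (hε : 0 ≤ ε) :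
    #S ≤ coverNum n S ε * #(ballKT n 1 ε) := by
  obtain ⟨T, hT, hcover⟩ : coverNum n S ε ∈ {k : ℕ | ∃ T : Finset (Perm (Fin n)), #T = k ∧
      ∀ σ ∈ S, ∃ τ ∈ T, (dKT n σ τ : ℝ) ≤ ε} :=
    Nat.sInf_mem ⟨_, univ, rfl, fun σ _ => ⟨σ, mem_univ _, by simp [dKT_self, hε]⟩⟩
  calc #S ≤ #(T.biUnion fun τ => ballKT n τ ε) := card_le_card fun σ hσ => by
          obtain ⟨τ, hτ, h⟩ := hcover σ hσ
          exact mem_biUnion.2 ⟨τ, hτ, by simpa [ballKT, dKT_comm τ] using h⟩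
    _ ≤ ∑ τ ∈ T, #(ballKT n τ ε) := card_biUnion_le
    _ = _ := by simp [card_ballKT, hT]

def lehmerCode (σ : Perm (Fin n)) (i : Fin n) : ℕ := #{j | i < j ∧ σ j < σ i}

def lehmerCodes (n : ℕ) : Finset (Fin n → ℕ) := Fintype.piFinset fun i : Fin n => range (n - i)

theorem lehmerCode_add_card_filter_lt (σ : Perm (Fin n)) (i : Fin n) :
    lehmerCode σ i + #{j | j < i ∧ σ j < σ i} = σ i := by
  have hbelow : #{j | σ j < σ i} = σ i := by
    rw [← Fin.card_Iio (σ i)]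
    exact card_equiv σ fun j => by simp
  rw [lehmerCode, ← hbelow, ← card_union_of_disjoint
    (disjoint_filter.2 fun j _ h₁ h₂ => lt_asymm h₁.1 h₂.1)]
  congr 1
  ext j
  simp only [mem_union, mem_filter, mem_univ, true_and]
  grind

/-- `lehmerCode σ i` is `σ i` minus the number of smaller values left of `i`, and only the values
strictly between `σ i` and `τ i` can make up the difference. -/
theorem lehmerCode_lt_of_lt {σ τ : Perm (Fin n)} {i : Fin n} (h : ∀ j < i, σ j = τ j)
    (hi : σ i < τ i) : lehmerCode σ i < lehmerCode τ i := by
  have hcover : #{j | j < i ∧ τ j < τ i} ≤ #{j | j < i ∧ σ j < σ i} + #(Ioo (σ i) (τ i)) := by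
    calc #{j | j < i ∧ τ j < τ i}
        ≤ #(({j | j < i ∧ σ j < σ i} : Finset _) ∪ ({j | σ j ∈ Ioo (σ i) (τ i)} : Finset _)) := by
          refine card_le_card fun j hj => ?_
          simp only [mem_union, mem_filter, mem_univ, true_and] at hj ⊢
          have hne : σ j ≠ σ i := σ.injective.ne hj.1.ne
          rw [← h j hj.1] at hj
          grind
      _ ≤ #{j | j < i ∧ σ j < σ i} + #{j | σ j ∈ Ioo (σ i) (τ i)} := card_union_le _ _
      _ = _ := by congr 1; exact card_equiv σ fun j => by simp
  have hσ := lehmerCode_add_card_filter_lt σ i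
  have hτ := lehmerCode_add_card_filter_lt τ i
  rw [Fin.card_Ioo] at hcover
  have : (σ i : ℕ) < τ i := hi
  omega

theorem lehmerCode_injective : Function.Injective (lehmerCode (n := n)) := by
  intro σ τ h
  refine Equiv.ext fun i => ?_
  induction i using WellFoundedLT.induction with
  | _ i ih =>
    rcases lt_trichotomy (σ i) (τ i) with hlt | heq | hgt
    · exact absurd (congrFun h i) (lehmerCode_lt_of_lt ih hlt).ne
    · exact heq
    · exact absurd (congrFun h i) (lehmerCode_lt_of_lt (fun j hj => (ih j hj).symm) hgt).ne'

theorem sum_lehmerCode (σ : Perm (Fin n)) : ∑ i, lehmerCode σ i = dKT n 1 σ := by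
  simp only [lehmerCode, dKT, card_filter, Fintype.sum_prod_type]
  rw [sum_comm]
  simp [and_comm]

theorem lehmerCode_mem_lehmerCodes (σ : Perm (Fin n)) : lehmerCode σ ∈ lehmerCodes n := by
  refine Fintype.mem_piFinset.2 fun i => mem_range.2 ?_
  have hle : lehmerCode σ i ≤ #(Ioi i) :=
    card_le_card fun j hj => mem_Ioi.2 (mem_filter.1 hj).2.1
  rw [Fin.card_Ioi] at hle
  omega

theorem card_lehmerCodes : #(lehmerCodes n) = n ! := by
  rw [lehmerCodes, Fintype.card_piFinset]
  simp only [card_range]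
  rw [Fin.prod_univ_eq_prod_range (fun i => n - i), ← Nat.descFactorial_eq_prod_range,
    Nat.descFactorial_self]

theorem image_lehmerCode : univ.image lehmerCode = lehmerCodes n :=
  eq_of_subset_of_card_le (image_subset_iff.2 fun σ _ => lehmerCode_mem_lehmerCodes σ) <| by
    rw [card_lehmerCodes, card_image_of_injective _ lehmerCode_injective, card_univ,
      Fintype.card_perm, Fintype.card_fin]

theorem card_ballKT_one_eq_card_lehmerCodes (k : ℕ) :
    #(ballKT n 1 k) = #{c ∈ lehmerCodes n | ∑ i, c i ≤ k} := by
  rw [← image_lehmerCode, filter_image, card_image_of_injective _ lehmerCode_injective]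
  simp [ballKT, sum_lehmerCode]

theorem choose_le_card_lehmerCodes (k : ℕ) :
    (n - 1).choose k ≤ #{c ∈ lehmerCodes n | ∑ i, c i ≤ k} := by
  calc (n - 1).choose k = #(powersetCard k {i : Fin n | (i : ℕ) < n - 1}) := by
        rw [card_powersetCard, Fin.card_filter_val_lt, min_eq_right (Nat.sub_le n 1)]
    _ ≤ _ := card_le_card_of_injOn (fun S i => if i ∈ S then 1 else 0) ?_ ?_
  · intro S hS
    obtain ⟨hS, hcard⟩ := mem_powersetCard.1 hS
    refine mem_filter.2 ⟨Fintype.mem_piFinset.2 fun i => mem_range.2 ?_, ?_⟩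
    · dsimp only
      split_ifs with hi
      · have := (mem_filter.1 (hS hi)).2
        omega
      · omega
    · simp [hcard]
  · intro S _ T _ hST
    ext i
    have : (if i ∈ S then 1 else 0) = (if i ∈ T then 1 else 0) := congrFun hST i
    split_ifs at this <;> simp_all

theorem choose_le_card_ballKT_one (k : ℕ) : (n - 1).choose k ≤ #(ballKT n 1 k) :=
  card_ballKT_one_eq_card_lehmerCodes k ▸ choose_le_card_lehmerCodes k

theorem card_ballKT_one_le_choose (k : ℕ) : #(ballKT n 1 k) ≤ (n + k).choose k := by
  rw [card_ballKT_one_eq_card_lehmerCodes]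
  simpa using card_le_choose_of_sum_le (s := {c ∈ lehmerCodes n | ∑ i, c i ≤ k})
    fun c hc => (mem_filter.1 hc).2

theorem ballKT_eq_floor (π : Perm (Fin n)) {R : ℝ} (hR : 0 ≤ R) :
    ballKT n π R = ballKT n π ⌊R⌋₊ :=
  filter_congr fun σ _ => by rw [Nat.cast_le, Nat.le_floor_iff hR]

/-- Pair the factors of `(n - 1).descFactorial r`: the first `r - q` dominate
`(r - j) (n - 1) / r`, the last `q` dominate `(n + q - j) / 2`. -/
theorem choose_mul_pow_le {n r q : ℕ} (hq : q ≤ r) (hn : 2 * r + 1 ≤ n) :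
    (n + q).choose q * (n - 1) ^ (r - q) ≤ 2 ^ q * (n - 1).choose r * r ^ (r - q) := by
  have hfac : q ! * r.descFactorial (r - q) = r ! := by
    simpa [Nat.sub_sub_self hq] using Nat.factorial_mul_descFactorial (Nat.sub_le r q)
  have hsplit : (n - 1 - (r - q)).descFactorial q * (n - 1).descFactorial (r - q)
      = (n - 1).descFactorial r := by
    simpa [Nat.sub_sub_self hq] using
      Nat.descFactorial_mul_descFactorial (n := n - 1) (Nat.sub_le r q)
  refine Nat.le_of_mul_le_mul_right ?_ (Nat.mul_pos q.factorial_pos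
    (Nat.descFactorial_pos.2 (Nat.sub_le r q)))
  calc (n + q).choose q * (n - 1) ^ (r - q) * (q ! * r.descFactorial (r - q))
      = (n + q).descFactorial q * (r.descFactorial (r - q) * (n - 1) ^ (r - q)) := by
        rw [Nat.descFactorial_eq_factorial_mul_choose (n + q) q]; ring
    _ ≤ (2 ^ q * (n - 1 - (r - q)).descFactorial q)
          * ((n - 1).descFactorial (r - q) * r ^ (r - q)) :=
        Nat.mul_le_mul (descFactorial_le_two_pow_mul (by omega))
          (descFactorial_mul_pow_le (by omega) _)
    _ = 2 ^ q * (n - 1).descFactorial r * r ^ (r - q) := by rw [← hsplit]; ring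
    _ = 2 ^ q * (n - 1).choose r * r ^ (r - q) * (q ! * r.descFactorial (r - q)) := by
        rw [hfac, Nat.descFactorial_eq_factorial_mul_choose]; ring

theorem mul_log_div_le_log_of_pow_le {n r q N : ℕ} (hr : 1 ≤ r) (hq : 4 * q ≤ r)
    (hn : 2 * r + 1 ≤ n)
    (h : (n - 1) ^ (r - q) ≤ 2 ^ q * r ^ (r - q) * N) :
    (r : ℝ) / 5 * Real.log (n / r) ≤ Real.log N := by
  have hr₀ : (0 : ℝ) < r := by exact_mod_cast hr
  have hn₁ : (2 * r : ℝ) ≤ (n - 1 : ℕ) := by exact_mod_cast (by omega : 2 * r ≤ n - 1)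
  have hn₀ : (0 : ℝ) < (n - 1 : ℕ) := by linarith
  have hn₂ : (2 : ℝ) ≤ n := by exact_mod_cast (by omega : 2 ≤ n)
  have hN : (0 : ℝ) < N := by
    have : 0 < N := Nat.pos_of_mul_pos_left ((pow_pos (by omega) _).trans_le h)
    exact_mod_cast this
  have hlogN : ((r - q : ℕ) : ℝ) * Real.log (n - 1 : ℕ)
      ≤ q * Real.log 2 + (r - q : ℕ) * Real.log r + Real.log N := by
    have hcast : ((n - 1 : ℕ) : ℝ) ^ (r - q) ≤ 2 ^ q * (r : ℝ) ^ (r - q) * N := by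
      exact_mod_cast h
    have := Real.log_le_log (by positivity) hcast
    rwa [Real.log_mul (by positivity) hN.ne', Real.log_mul (by positivity) (by positivity),
      Real.log_pow, Real.log_pow, Real.log_pow] at this
  have hA : Real.log 2 + Real.log r ≤ Real.log (n - 1 : ℕ) := by
    rw [← Real.log_mul two_ne_zero hr₀.ne']
    exact Real.log_le_log (by positivity) hn₁
  have hY : Real.log (n / r) ≤ Real.log 2 + Real.log (n - 1 : ℕ) - Real.log r := by
    rw [Real.log_div (by positivity) hr₀.ne', ← Real.log_mul two_ne_zero hn₀.ne']
    have : (n : ℝ) ≤ 2 * (n - 1 : ℕ) := by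
      rw [Nat.cast_sub (by omega)]; push_cast; linarith
    linarith [Real.log_le_log (by positivity) this]
  have hL : 0 < Real.log 2 := Real.log_pos one_lt_two
  have hq' : (4 * q : ℝ) ≤ r := by exact_mod_cast hq
  rw [Nat.cast_sub (by omega)] at hlogN
  -- With `A = log ((n - 1) / r) ≥ L = log 2`, the gap `(r - q) A - q L - (r / 5) (A + L)` is
  -- `(4 r / 5 - q) (A - L) + (3 r / 5 - 2 q) L ≥ 0`.
  nlinarith [mul_le_mul_of_nonneg_left hY (by positivity : (0 : ℝ) ≤ r / 5),
    mul_nonneg (by linarith : (0 : ℝ) ≤ 4 * r / 5 - q)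
      (by linarith : 0 ≤ Real.log (n - 1 : ℕ) - Real.log r - Real.log 2),
    mul_nonneg (by linarith : (0 : ℝ) ≤ 3 * r / 5 - 2 * q) hL.le]

end KendallTau

open KendallTau in
/-- **Lemma 2.**  For an integer `1 ≤ r < n/2`,
`log N(B(π, r), r/4) ≥ (r/5) log(n/r)`. -/
theorem cover_number_small_ball_lower (n : ℕ) (π : Equiv.Perm (Fin n)) (r : ℕ)
    (hr1 : 1 ≤ r) (hr2 : (r : ℝ) < (n : ℝ) / 2) :
    (r : ℝ) / 5 * Real.log ((n : ℝ) / (r : ℝ)) ≤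
      Real.log (coverNum n (ballKT n π (r : ℝ)) ((r : ℝ) / 4)) := by
  have hn : 2 * r + 1 ≤ n := by
    have : ((2 * r : ℕ) : ℝ) < n := by push_cast; linarith
    exact_mod_cast this
  set N := coverNum n (ballKT n π r) ((r : ℝ) / 4)
  set q := r / 4
  have hcover : (n - 1).choose r ≤ N * (n + q).choose q :=
    calc (n - 1).choose r ≤ #(ballKT n π r) := card_ballKT π r ▸ choose_le_card_ballKT_one r
      _ ≤ N * #(ballKT n 1 ((r : ℝ) / 4)) := card_le_coverNum_mul_card_ballKT _ (by positivity)
      _ ≤ N * (n + q).choose q := by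
        rw [ballKT_eq_floor 1 (by positivity), Nat.floor_div_ofNat, Nat.floor_natCast]
        exact Nat.mul_le_mul_left _ (card_ballKT_one_le_choose _)
  refine mul_log_div_le_log_of_pow_le hr1 (Nat.mul_div_le r 4) hn <|
    Nat.le_of_mul_le_mul_left (c := (n + q).choose q) ?_ (Nat.choose_pos (Nat.le_add_left _ _))
  calc (n + q).choose q * (n - 1) ^ (r - q)
      ≤ 2 ^ q * (n - 1).choose r * r ^ (r - q) := choose_mul_pow_le (Nat.div_le_self r 4) hn
    _ ≤ 2 ^ q * (N * (n + q).choose q) * r ^ (r - q) := by gcongr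
    _ = (n + q).choose q * (2 ^ q * r ^ (r - q) * N) := by ring
end

section
/- For 0 < q < p < 1, the Kullback–Leibler divergence between Bernoulli distributions satisfies KL(Ber(p) ‖ Ber(q)) = ∫_q^p (p − x)/(x(1 − x)) dx ≥ (p − q)²/(2p(1 − q)), and moreover KL(Ber(q) ‖ Ber(p)) ≥ (p − q)²/(2p(1 − q)). -/
/-!
Both divergences are integrals over `[q, p]` of a nonnegative linear function divided by
`x (1 - x)`: `d/dx [c log x + (1 - c) log (1 - x)] = (c - x) / (x (1 - x))`, so
`KL(p ‖ q) = ∫_q^p (p - x) / (x (1 - x))` and `KL(q ‖ p) = ∫_q^p (x - q) / (x (1 - x))`.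
On `[q, p]` the denominator is at most `p (1 - q)`, and both numerators integrate to `(p - q)² / 2`.
-/

open Set Real intervalIntegral

noncomputable def klBer (p q : ℝ) : ℝ :=
  p * Real.log (p / q) + (1 - p) * Real.log ((1 - p) / (1 - q))

lemma hasDerivAt_mul_log_add_mul_log_one_sub (c : ℝ) {x : ℝ} (hx0 : x ≠ 0) (hx1 : x ≠ 1) :
    HasDerivAt (fun y => c * log y + (1 - c) * log (1 - y)) ((c - x) / (x * (1 - x))) x := by
  have h1x : 1 - x ≠ 0 := sub_ne_zero.mpr (Ne.symm hx1)
  have hlog_one_sub : HasDerivAt (fun y => log (1 - y)) (-1 / (1 - x)) x := by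
    simpa [Function.comp_def, div_eq_mul_inv] using
      (hasDerivAt_log h1x).comp x ((hasDerivAt_id x).const_sub 1)
  refine (((hasDerivAt_log hx0).const_mul c).add (hlog_one_sub.const_mul (1 - c))).congr_deriv ?_
  field_simp
  ring

lemma integral_sub_div_mul_one_sub (c : ℝ) {a b : ℝ} (hab : uIcc a b ⊆ Ioo 0 1) :
    ∫ x in a..b, (c - x) / (x * (1 - x)) =
      (c * log b + (1 - c) * log (1 - b)) - (c * log a + (1 - c) * log (1 - a)) := by
  have hden : ∀ x ∈ uIcc a b, x * (1 - x) ≠ 0 := fun x hx => by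
    have := hab hx
    exact mul_ne_zero this.1.ne' (sub_ne_zero.mpr this.2.ne')
  refine integral_eq_sub_of_hasDerivAt
    (fun x hx => hasDerivAt_mul_log_add_mul_log_one_sub c (hab hx).1.ne' (hab hx).2.ne)
    (ContinuousOn.intervalIntegrable ?_)
  exact ContinuousOn.div (by fun_prop) (by fun_prop) hden

lemma klBer_eq_integral {p q : ℝ} (hp : p ∈ Ioo (0 : ℝ) 1) (hq : q ∈ Ioo (0 : ℝ) 1) :
    klBer p q = ∫ x in q..p, (p - x) / (x * (1 - x)) := by
  rw [integral_sub_div_mul_one_sub p (ordConnected_Ioo.uIcc_subset hq hp), klBer,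
    log_div hp.1.ne' hq.1.ne', log_div (sub_pos.2 hp.2).ne' (sub_pos.2 hq.2).ne']
  ring

lemma klBer_eq_integral_swap {p q : ℝ} (hp : p ∈ Ioo (0 : ℝ) 1) (hq : q ∈ Ioo (0 : ℝ) 1) :
    klBer q p = ∫ x in q..p, (x - q) / (x * (1 - x)) := by
  rw [klBer_eq_integral hq hp, integral_symm, ← intervalIntegral.integral_neg]
  congr 1 with x
  ring

lemma integral_div_le_integral_div_mul_one_sub {g : ℝ → ℝ} {q p : ℝ} (hq : 0 < q) (hqp : q ≤ p)
    (hp : p < 1) (hg : ContinuousOn g (Icc q p)) (hg0 : ∀ x ∈ Icc q p, 0 ≤ g x) :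
    (∫ x in q..p, g x) / (p * (1 - q)) ≤ ∫ x in q..p, g x / (x * (1 - x)) := by
  have hden : ∀ x ∈ Icc q p, 0 < x * (1 - x) := fun x hx =>
    mul_pos (hq.trans_le hx.1) (sub_pos.2 (hx.2.trans_lt hp))
  rw [← intervalIntegral.integral_div]
  refine integral_mono_on hqp ?_ ?_ fun x hx => ?_
  · exact ((uIcc_of_le hqp).symm ▸ hg.div_const _).intervalIntegrable
  · exact ((uIcc_of_le hqp).symm ▸ hg.div (by fun_prop) fun x hx => (hden x hx).ne')
      |>.intervalIntegrable
  · have hx0 : 0 < x := hq.trans_le hx.1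
    exact div_le_div_of_nonneg_left (hg0 x hx) (hden x hx)
      (mul_le_mul hx.2 (by linarith [hx.1]) (by linarith [hx.2]) (hx0.le.trans hx.2))

/-- **Bernoulli KL bounds.**  For `0 < q < p < 1`:
`KL(Ber(p) ‖ Ber(q)) = ∫_q^p (p-x)/(x(1-x)) dx ≥ (p-q)²/(2p(1-q))`, and moreover
`KL(Ber(q) ‖ Ber(p)) ≥ (p-q)²/(2p(1-q))`. -/
theorem bernoulli_kl_integral_and_bounds (p q : ℝ) (hq : 0 < q) (hqp : q < p) (hp : p < 1) :
    klBer p q = (∫ x in q..p, (p - x) / (x * (1 - x))) ∧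
    (p - q) ^ 2 / (2 * p * (1 - q)) ≤ klBer p q ∧
    (p - q) ^ 2 / (2 * p * (1 - q)) ≤ klBer q p := by
  have hpI : p ∈ Ioo (0 : ℝ) 1 := ⟨hq.trans hqp, hp⟩
  have hqI : q ∈ Ioo (0 : ℝ) 1 := ⟨hq, hqp.trans hp⟩
  have hbound : (p - q) ^ 2 / (2 * p * (1 - q)) = ((p - q) ^ 2 / 2) / (p * (1 - q)) := by
    rw [div_div, mul_assoc]
  have hint_left : ∫ x in q..p, (p - x) = (p - q) ^ 2 / 2 := by
    simp [integral_comp_sub_left (fun x => x)]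
  have hint_right : ∫ x in q..p, (x - q) = (p - q) ^ 2 / 2 := by
    simp [integral_comp_sub_right (fun x => x)]
  refine ⟨klBer_eq_integral hpI hqI, ?_, ?_⟩
  · rw [klBer_eq_integral hpI hqI, hbound, ← hint_left]
    exact integral_div_le_integral_div_mul_one_sub hq hqp.le hp (by fun_prop)
      fun x hx => sub_nonneg.2 hx.2
  · rw [klBer_eq_integral_swap hpI hqI, hbound, ← hint_right]
    exact integral_div_le_integral_div_mul_one_sub hq hqp.le hp (by fun_prop)
      fun x hx => sub_nonneg.2 hx.1
end

section
/- Fix π, σ ∈ S_n, λ ∈ (0,1/2), and p ∈ (0,1]. Let P_π denote the distribution of the observations in the noisy sorting model with probability matrix M*_n(λ) and underlying permutation π under sampling model (O1); that is, P_π is the product over the (n choose 2) unordered pairs {i,j} of the three-point distribution assigning probability 1−p to 'not compared', probability p·[M*_n(λ)]_{π(i),π(j)} to 'i wins', and probability p·[M*_n(λ)]_{π(j),π(i)} to 'j wins'. Then KL(P_π ‖ P_σ) = 2·d_KT(π, σ)·p·λ·log((1+2λ)/(1−2λ)). -/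
open Finset

/-- The matrix `M*_n(λ)`. -/
noncomputable def Mstar (n : ℕ) (lam : ℝ) (i j : Fin n) : ℝ :=
  if j < i then 1 / 2 + lam else if i < j then 1 / 2 - lam else 1 / 2

abbrev Pairs (n : ℕ) := {q : Fin n × Fin n // q.1 < q.2}

/-- Observations in sampling model (O1): for each unordered pair, either no comparison
(`none`), or the smaller-index item wins (`some true`), or it loses (`some false`). -/
abbrev Obs1 (n : ℕ) := Pairs n → Option Bool

/-- The probability mass function of the observations in the noisy sorting model with
underlying permutation `πs` and probability matrix `M` under sampling model (O1): product
over pairs of `1-p` (not compared), `p·M_{πs i, πs j}` (`i` wins), `p·(1 − M_{πs i, πs j})`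
(`j` wins). -/
noncomputable def prob1 (n : ℕ) (p : ℝ) (M : Fin n → Fin n → ℝ) (πs : Equiv.Perm (Fin n))
    (ω : Obs1 n) : ℝ :=
  ∏ q : Pairs n,
    match ω q with
    | none => 1 - p
    | some true => p * M (πs q.1.1) (πs q.1.2)
    | some false => p * (1 - M (πs q.1.1) (πs q.1.2))

/-- Kullback–Leibler divergence between two probability mass functions on a fintype. -/
noncomputable def klFin {α : Type*} [Fintype α] (P Q : α → ℝ) : ℝ :=
  ∑ a : α, P a * Real.log (P a / Q a)

/-! KL divergence is additive over the independent pairs, so `KL(P_π ‖ P_σ)` is a sum over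
pairs `i < j`. On one pair the outcome "not compared" has the same probability under both laws
and the rest scales by `p`. If `π` and `σ` order the pair alike the two laws coincide; otherwise
the win probabilities `1/2 ± λ` are exchanged, which costs `p · 2λ log((1+2λ)/(1-2λ))`. The pairs
ordered differently are exactly those counted by `d_KT(π, σ)`. -/

theorem klFin_self {α : Type*} [Fintype α] (P : α → ℝ) : klFin P P = 0 := by
  simp [klFin]

theorem sum_pi_prod_mul_eq_of_sum_eq_one {ι β : Type*} [Fintype ι] [DecidableEq ι] [Fintype β]
    {f : ι → β → ℝ} (hf : ∀ i, ∑ x, f i x = 1) (i : ι) (h : β → ℝ) :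
    ∑ ω : ι → β, (∏ j, f j (ω j)) * h (ω i) = ∑ x, f i x * h x := by
  set F : ι → β → ℝ := fun j x => f j x * if j = i then h x else 1
  have hF : ∀ ω : ι → β, ∏ j, F j (ω j) = (∏ j, f j (ω j)) * h (ω i) := fun ω => by
    simp only [F, Finset.prod_mul_distrib, Fintype.prod_ite_eq']
  calc ∑ ω : ι → β, (∏ j, f j (ω j)) * h (ω i) = ∏ j, ∑ x, F j x := by
        rw [Fintype.prod_sum]; simp only [hF]
    _ = ∑ x, F i x := Fintype.prod_eq_single i fun j hj => by simp [F, hj, hf j]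
    _ = ∑ x, f i x * h x := by simp [F]

theorem klFin_pi {ι β : Type*} [Fintype ι] [DecidableEq ι] [Fintype β] {f g : ι → β → ℝ}
    (hf : ∀ i, ∑ x, f i x = 1) (hfg : ∀ i x, g i x = 0 → f i x = 0) :
    klFin (fun ω : ι → β => ∏ i, f i (ω i)) (fun ω => ∏ i, g i (ω i)) =
      ∑ i, klFin (f i) (g i) := by
  have hlog : ∀ ω : ι → β, (∏ i, f i (ω i)) * Real.log ((∏ i, f i (ω i)) / ∏ i, g i (ω i)) =
      ∑ i, (∏ j, f j (ω j)) * Real.log (f i (ω i) / g i (ω i)) := fun ω => by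
    rw [← Finset.mul_sum]
    by_cases hP : ∏ i, f i (ω i) = 0
    · simp [hP]
    have hf0 : ∀ i, f i (ω i) ≠ 0 := fun i hi => hP (Finset.prod_eq_zero (Finset.mem_univ i) hi)
    rw [← Finset.prod_div_distrib,
      Real.log_prod fun i _ => div_ne_zero (hf0 i) fun hg => hf0 i (hfg i _ hg)]
  simp only [klFin, hlog]
  rw [Finset.sum_comm]
  exact Finset.sum_congr rfl fun i _ =>
    sum_pi_prod_mul_eq_of_sum_eq_one hf i fun x => Real.log (f i x / g i x)

def pairLaw (p a : ℝ) : Option Bool → ℝ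
  | none => 1 - p
  | some true => p * a
  | some false => p * (1 - a)

theorem sum_pairLaw (p a : ℝ) : ∑ x, pairLaw p a x = 1 := by
  simp only [Fintype.sum_option, Fintype.sum_bool, pairLaw]
  ring

theorem pairLaw_eq_zero_of_eq_zero {p a b : ℝ} (hb0 : b ≠ 0) (hb1 : b ≠ 1) {x : Option Bool}
    (hx : pairLaw p b x = 0) : pairLaw p a x = 0 := by
  rcases x with _ | _ | _
  · exact hx
  · obtain rfl : p = 0 := (mul_eq_zero.1 hx).resolve_right (sub_ne_zero.2 hb1.symm)
    simp [pairLaw]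
  · obtain rfl : p = 0 := (mul_eq_zero.1 hx).resolve_right hb0
    simp [pairLaw]

theorem prob1_eq_prod_pairLaw (n : ℕ) (p : ℝ) (M : Fin n → Fin n → ℝ)
    (πs : Equiv.Perm (Fin n)) :
    prob1 n p M πs = fun ω => ∏ q : Pairs n, pairLaw p (M (πs q.1.1) (πs q.1.2)) (ω q) := by
  funext ω
  refine Finset.prod_congr rfl fun q _ => ?_
  rcases ω q with _ | _ | _ <;> rfl

theorem klFin_pairLaw_one_sub (p a : ℝ) :
    klFin (pairLaw p a) (pairLaw p (1 - a)) = p * ((2 * a - 1) * Real.log (a / (1 - a))) := by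
  have hscale : ∀ x y : ℝ,
      p * x * Real.log (p * x / (p * y)) = p * (x * Real.log (x / y)) := fun x y => by
    rcases eq_or_ne p 0 with hp | hp
    · simp [hp]
    · rw [mul_div_mul_left _ _ hp, mul_assoc]
  have hswap : Real.log ((1 - a) / a) = -Real.log (a / (1 - a)) := by rw [← Real.log_inv, inv_div]
  simp only [klFin, Fintype.sum_option, Fintype.sum_bool, pairLaw, hscale,
    Real.log_div_self, sub_sub_cancel, hswap]
  ring

section Mstar

variable {n : ℕ} {lam : ℝ}

theorem Mstar_of_lt {i j : Fin n} (h : i < j) : Mstar n lam i j = 1 / 2 - lam := by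
  rw [Mstar, if_neg (asymm h), if_pos h]

theorem Mstar_of_gt {i j : Fin n} (h : j < i) : Mstar n lam i j = 1 / 2 + lam := by
  rw [Mstar, if_pos h]

theorem Mstar_mem_Ioo (hlam : |lam| < 1 / 2) (i j : Fin n) : Mstar n lam i j ∈ Set.Ioo 0 1 := by
  obtain ⟨hlo, hhi⟩ := abs_lt.1 hlam
  unfold Mstar
  split_ifs <;> constructor <;> linarith

theorem Mstar_eq_of_lt_iff_lt {a b c d : Fin n} (hab : a ≠ b) (hcd : c ≠ d)
    (h : a < b ↔ c < d) : Mstar n lam a b = Mstar n lam c d := by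
  rcases hab.lt_or_gt with hab | hab
  · rw [Mstar_of_lt hab, Mstar_of_lt (h.1 hab)]
  · rw [Mstar_of_gt hab, Mstar_of_gt (hcd.lt_or_gt.resolve_left (h.not.1 (asymm hab)))]

theorem Mstar_eq_one_sub_of_not_lt_iff_lt {a b c d : Fin n} (hab : a ≠ b) (hcd : c ≠ d)
    (h : ¬(a < b ↔ c < d)) : Mstar n lam c d = 1 - Mstar n lam a b := by
  rcases hab.lt_or_gt with hab | hab
  · rw [Mstar_of_lt hab,
      Mstar_of_gt (hcd.lt_or_gt.resolve_left fun hcd => h (iff_of_true hab hcd))]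
    ring
  · rw [Mstar_of_gt hab, Mstar_of_lt (not_not.1 fun hcd => h (iff_of_false (asymm hab) hcd))]
    ring

theorem two_mul_Mstar_sub_one_mul_log {i j : Fin n} (hij : i ≠ j) :
    (2 * Mstar n lam i j - 1) * Real.log (Mstar n lam i j / (1 - Mstar n lam i j)) =
      2 * lam * Real.log ((1 + 2 * lam) / (1 - 2 * lam)) := by
  have hratio : (1 + 2 * lam) / (1 - 2 * lam) = (1 / 2 + lam) / (1 - (1 / 2 + lam)) := by
    rw [show 1 + 2 * lam = 2 * (1 / 2 + lam) by ring,
      show 1 - 2 * lam = 2 * (1 - (1 / 2 + lam)) by ring, mul_div_mul_left _ _ two_ne_zero]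
  rcases hij.lt_or_gt with h | h
  · have hinv :
        (1 / 2 - lam) / (1 - (1 / 2 - lam)) = ((1 / 2 + lam) / (1 - (1 / 2 + lam)))⁻¹ := by
      rw [inv_div]
      ring
    rw [Mstar_of_lt h, hratio, hinv, Real.log_inv]
    ring
  · rw [Mstar_of_gt h, hratio]
    ring

theorem klFin_pairLaw_Mstar (p : ℝ) {a b c d : Fin n} (hab : a ≠ b) (hcd : c ≠ d) :
    klFin (pairLaw p (Mstar n lam a b)) (pairLaw p (Mstar n lam c d)) =
      if (a < b ↔ c < d) then 0 else 2 * p * lam * Real.log ((1 + 2 * lam) / (1 - 2 * lam)) := by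
  split_ifs with h
  · rw [Mstar_eq_of_lt_iff_lt hab hcd h, klFin_self]
  · rw [Mstar_eq_one_sub_of_not_lt_iff_lt hab hcd h, klFin_pairLaw_one_sub,
      two_mul_Mstar_sub_one_mul_log hab]
    ring

end Mstar

theorem card_discordant_eq_dKT (n : ℕ) (π σ : Equiv.Perm (Fin n)) :
    #{q : Pairs n | ¬(π q.1.1 < π q.1.2 ↔ σ q.1.1 < σ q.1.2)} = dKT n π σ := by
  -- orient each discordant pair so that `σ` ranks it increasingly
  refine card_bij (fun q _ => if σ q.1.1 < σ q.1.2 then q.1 else q.1.swap) ?_ ?_ ?_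
  · rintro ⟨⟨i, j⟩, hij⟩ hq
    have hπ : π i ≠ π j := π.injective.ne hij.ne
    have hσ : σ i ≠ σ j := σ.injective.ne hij.ne
    simp only [mem_filter, mem_univ, true_and] at hq ⊢
    grind
  · rintro ⟨⟨i, j⟩, hij⟩ - ⟨⟨k, l⟩, hkl⟩ - h
    grind
  · rintro ⟨i, j⟩ hr
    simp only [mem_filter, mem_univ, true_and] at hr
    have hij : i ≠ j := fun h => by simp [h] at hr
    rcases hij.lt_or_gt with hij | hji
    · exact ⟨⟨(i, j), hij⟩, by grind, by simp [hr.1]⟩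
    · exact ⟨⟨(j, i), hji⟩, by grind, by simp [asymm hr.1]⟩

theorem kl_noisy_sorting_O1_general (n : ℕ) (π σ : Equiv.Perm (Fin n)) (lam p : ℝ)
    (hlam0 : 0 < lam) (hlam : lam < 1 / 2) :
    klFin (prob1 n p (Mstar n lam) π) (prob1 n p (Mstar n lam) σ) =
      2 * (dKT n π σ : ℝ) * p * lam * Real.log ((1 + 2 * lam) / (1 - 2 * lam)) := by
  have hM : ∀ i j, Mstar n lam i j ∈ Set.Ioo 0 1 :=
    Mstar_mem_Ioo (abs_lt.2 ⟨by linarith, hlam⟩)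
  have hne : ∀ (τ : Equiv.Perm (Fin n)) (q : Pairs n), τ q.1.1 ≠ τ q.1.2 :=
    fun τ q => τ.injective.ne q.2.ne
  rw [prob1_eq_prod_pairLaw, prob1_eq_prod_pairLaw,
    klFin_pi (fun q => sum_pairLaw _ _) fun _ _ => pairLaw_eq_zero_of_eq_zero
      (hM _ _).1.ne' (hM _ _).2.ne]
  simp only [klFin_pairLaw_Mstar p (hne π _) (hne σ _)]
  rw [sum_ite, sum_const_zero, zero_add, sum_const, card_discordant_eq_dKT, nsmul_eq_mul]
  ring

/-- **Lemma 4, model (O1).**  For the noisy sorting model with matrix `M*_n(λ)` under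
sampling model (O1), `KL(P_π ‖ P_σ) = 2 d_KT(π,σ) p λ log((1+2λ)/(1-2λ))`. -/
theorem kl_noisy_sorting_O1 (n : ℕ) (π σ : Equiv.Perm (Fin n)) (lam p : ℝ)
    (hlam0 : 0 < lam) (hlam : lam < 1 / 2) (hp0 : 0 < p) (hp1 : p ≤ 1) :
    klFin (prob1 n p (Mstar n lam) π) (prob1 n p (Mstar n lam) σ) =
      2 * (dKT n π σ : ℝ) * p * lam * Real.log ((1 + 2 * lam) / (1 - 2 * lam)) :=
  kl_noisy_sorting_O1_general n π σ lam p hlam0 hlam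
end

section
/- Fix π, σ ∈ S_n and λ ∈ (0,1/2). Let Q_π be the distribution on pairs-with-winner of a single comparison under the noisy sorting model with probability matrix M*_n(λ) and underlying permutation π in sampling model (O2): a pair {i,j} is chosen uniformly among the (n choose 2) pairs, and given pair {i,j}, item i wins with probability [M*_n(λ)]_{π(i),π(j)}. Let P_π = Q_π^{⊗N} be the distribution of N i.i.d. such comparisons. Then KL(P_π ‖ P_σ) = 2·d_KT(π, σ)·N·(n choose 2)^{−1}·λ·log((1+2λ)/(1−2λ)). -/
open Finset

/-- Observations in sampling model (O2): `N` comparisons, each given by a pair together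
with a winner (`true` = the smaller-index item of the pair wins). -/
abbrev Obs2 (n N : ℕ) := Fin N → Pairs n × Bool

/-- The probability mass function of `N` i.i.d. comparisons under sampling model (O2):
each comparison picks a pair uniformly among the `(n choose 2)` pairs and the
smaller-index item `i` of the pair wins with probability `M_{πs i, πs j}`. -/
noncomputable def prob2 (n N : ℕ) (M : Fin n → Fin n → ℝ) (πs : Equiv.Perm (Fin n))
    (ω : Obs2 n N) : ℝ :=
  ∏ t : Fin N,
    (n.choose 2 : ℝ)⁻¹ *
      (if (ω t).2 then M (πs (ω t).1.1.1) (πs (ω t).1.1.2)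
       else 1 - M (πs (ω t).1.1.1) (πs (ω t).1.1.2))

/-- Single-comparison pmf. -/
noncomputable def Q1 (n : ℕ) (M : Fin n → Fin n → ℝ) (πs : Equiv.Perm (Fin n))
    (x : Pairs n × Bool) : ℝ :=
  (n.choose 2 : ℝ)⁻¹ *
    (if x.2 then M (πs x.1.1.1) (πs x.1.1.2) else 1 - M (πs x.1.1.1) (πs x.1.1.2))

lemma prob2_eq_prod (n N : ℕ) (M : Fin n → Fin n → ℝ) (πs : Equiv.Perm (Fin n))
    (ω : Obs2 n N) : prob2 n N M πs ω = ∏ t : Fin N, Q1 n M πs (ω t) := rfl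

lemma sum_prod_pi {α : Type*} [Fintype α] (P : α → ℝ) (hP1 : ∑ a : α, P a = 1) (N : ℕ) :
    ∑ ω : Fin N → α, ∏ t : Fin N, P (ω t) = 1 := by
  induction N with
  | zero => simp
  | succ N ih =>
    rw [← (Fin.consEquiv (fun _ : Fin (N + 1) => α)).sum_comp]
    rw [Fintype.sum_prod_type]
    simp only [Fin.consEquiv_apply, Fin.prod_univ_succ, Fin.cons_zero, Fin.cons_succ]
    rw [← Finset.sum_mul_sum]
    rw [hP1, ih, one_mul]

lemma klFin_pi_s10 {α : Type*} [Fintype α] (P Q : α → ℝ) (hP : ∀ a, 0 < P a)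
    (hQ : ∀ a, 0 < Q a) (hP1 : ∑ a : α, P a = 1) (N : ℕ) :
    klFin (fun ω : Fin N → α => ∏ t, P (ω t)) (fun ω => ∏ t, Q (ω t)) = N * klFin P Q := by
  induction N with
  | zero => simp [klFin]
  | succ N ih =>
    have hLp : ∀ ω : Fin N → α, 0 < ∏ t, P (ω t) := fun ω => Finset.prod_pos fun t _ => hP _
    have hLq : ∀ ω : Fin N → α, 0 < ∏ t, Q (ω t) := fun ω => Finset.prod_pos fun t _ => hQ _
    have key : klFin (fun ω : Fin (N + 1) → α => ∏ t, P (ω t)) (fun ω => ∏ t, Q (ω t))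
        = ∑ a : α, ∑ ω : Fin N → α, (P a * ∏ t, P (ω t)) *
            Real.log ((P a * ∏ t, P (ω t)) / (Q a * ∏ t, Q (ω t))) := by
      rw [klFin, ← (Fin.consEquiv (fun _ : Fin (N + 1) => α)).sum_comp, Fintype.sum_prod_type]
      simp only [Fin.consEquiv_apply, Fin.prod_univ_succ, Fin.cons_zero, Fin.cons_succ]
    rw [key]
    push_cast
    have hsum : ∑ ω : Fin N → α, ∏ t : Fin N, P (ω t) = 1 := sum_prod_pi P hP1 N
    have step : ∀ (a : α) (ω : Fin N → α),
        (P a * ∏ t, P (ω t)) * Real.log ((P a * ∏ t, P (ω t)) / (Q a * ∏ t, Q (ω t)))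
          = (P a * Real.log (P a / Q a)) * (∏ t, P (ω t))
            + P a * ((∏ t, P (ω t)) * Real.log ((∏ t, P (ω t)) / (∏ t, Q (ω t)))) := by
      intro a ω
      have h1 : (P a * ∏ t, P (ω t)) / (Q a * ∏ t, Q (ω t))
          = (P a / Q a) * ((∏ t, P (ω t)) / (∏ t, Q (ω t))) := by
        field_simp
      rw [h1, Real.log_mul (div_pos (hP a) (hQ a)).ne' (div_pos (hLp ω) (hLq ω)).ne']
      ring
    calc ∑ a : α, ∑ ω : Fin N → α, (P a * ∏ t, P (ω t)) *
            Real.log ((P a * ∏ t, P (ω t)) / (Q a * ∏ t, Q (ω t)))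
        = ∑ a : α, ((P a * Real.log (P a / Q a)) *
            (∑ ω : Fin N → α, ∏ t, P (ω t))
            + P a * ∑ ω : Fin N → α, ((∏ t, P (ω t)) *
              Real.log ((∏ t, P (ω t)) / (∏ t, Q (ω t))))) := by
          refine Finset.sum_congr rfl fun a _ => ?_
          simp only [step]
          rw [Finset.sum_add_distrib, Finset.mul_sum, Finset.mul_sum]
      _ = ((N : ℝ) + 1) * klFin P Q := by
          have h2 : ∀ a : α, (∑ ω : Fin N → α, ((∏ t, P (ω t)) *
              Real.log ((∏ t, P (ω t)) / (∏ t, Q (ω t))))) = N * klFin P Q := fun a => ih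
          simp only [hsum, mul_one]
          rw [Finset.sum_add_distrib]
          rw [← Finset.sum_mul, hP1]
          simp only [klFin] at *
          rw [ih]
          ring

lemma card_lt_pairs (n : ℕ) :
    (Finset.univ.filter fun q : Fin n × Fin n => q.1 < q.2).card = n.choose 2 := by
  have hcard : (Finset.univ.filter fun q : Fin n × Fin n => q.1 < q.2).card
      = (Finset.univ.filter fun q : Fin n × Fin n => q.2 < q.1).card := by
    apply Finset.card_bij (fun q _ => q.swap)
    · intro q hq; simp_all
    · intro q hq q' hq' h
      exact Prod.swap_injective h
    · intro q hq
      exact ⟨q.swap, by simp_all, by simp⟩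
  have hunion : (Finset.univ.filter fun q : Fin n × Fin n => q.1 < q.2)
      ∪ (Finset.univ.filter fun q : Fin n × Fin n => q.2 < q.1)
      = (Finset.univ : Finset (Fin n)).offDiag := by
    ext q
    simp only [Finset.mem_union, Finset.mem_filter, Finset.mem_univ, true_and,
      Finset.mem_offDiag]
    constructor
    · rintro (h | h)
      · exact fun he => absurd he h.ne
      · exact fun he => absurd he h.ne'
    · intro h
      exact Ne.lt_or_gt h
  have hdisj : Disjoint (Finset.univ.filter fun q : Fin n × Fin n => q.1 < q.2)
      (Finset.univ.filter fun q : Fin n × Fin n => q.2 < q.1) := by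
    rw [Finset.disjoint_filter]
    intro q _ h h'
    exact absurd h' (not_lt_of_gt h)
  have hoff : ((Finset.univ : Finset (Fin n)).offDiag).card = n * n - n := by
    rw [Finset.offDiag_card]
    simp
  have := Finset.card_union_of_disjoint hdisj
  rw [hunion, hoff, ← hcard] at this
  have hc2 : n.choose 2 = n * (n - 1) / 2 := Nat.choose_two_right n
  have hmul : n * (n - 1) = n * n - n := by
    rw [Nat.mul_sub, mul_one]
  omega


lemma Mstar_lt (n : ℕ) (lam : ℝ) (i j : Fin n) (h : j < i) :
    Mstar n lam i j = 1 / 2 + lam := by simp [Mstar, h]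

lemma Mstar_gt (n : ℕ) (lam : ℝ) (i j : Fin n) (h : i < j) :
    Mstar n lam i j = 1 / 2 - lam := by simp [Mstar, h, asymm h]

lemma two_point_kl (lam a b : ℝ) (h0 : 0 < lam) (h : lam < 1 / 2)
    (ha : a = 1 / 2 + lam ∨ a = 1 / 2 - lam) (hb : b = 1 / 2 + lam ∨ b = 1 / 2 - lam) :
    a * Real.log (a / b) + (1 - a) * Real.log ((1 - a) / (1 - b))
      = if a = b then 0 else 2 * lam * Real.log ((1 + 2 * lam) / (1 - 2 * lam)) := by
  have hp : (0:ℝ) < 1 / 2 + lam := by linarith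
  have hm : (0:ℝ) < 1 / 2 - lam := by linarith
  have hp2 : (0:ℝ) < 1 + 2 * lam := by linarith
  have hm2 : (0:ℝ) < 1 - 2 * lam := by linarith
  have hne : (1:ℝ) / 2 + lam ≠ 1 / 2 - lam := by intro he; linarith
  rcases ha with rfl | rfl <;> rcases hb with rfl | rfl
  · rw [if_pos rfl, div_self hp.ne', div_self (by linarith : (1:ℝ) - (1/2 + lam) ≠ 0)]
    simp
  · rw [if_neg hne]
    have e1 : (1:ℝ) - (1 / 2 + lam) = 1 / 2 - lam := by ring
    have e2 : (1:ℝ) - (1 / 2 - lam) = 1 / 2 + lam := by ring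
    rw [e1, e2]
    rw [Real.log_div hp.ne' hm.ne', Real.log_div hm.ne' hp.ne',
      Real.log_div hp2.ne' hm2.ne']
    have e3 : (1:ℝ) / 2 + lam = (1 + 2 * lam) / 2 := by ring
    have e4 : (1:ℝ) / 2 - lam = (1 - 2 * lam) / 2 := by ring
    rw [e3, e4, Real.log_div hp2.ne' two_ne_zero, Real.log_div hm2.ne' two_ne_zero]
    ring
  · rw [if_neg (Ne.symm hne)]
    have e1 : (1:ℝ) - (1 / 2 + lam) = 1 / 2 - lam := by ring
    have e2 : (1:ℝ) - (1 / 2 - lam) = 1 / 2 + lam := by ring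
    rw [e1, e2]
    rw [Real.log_div hm.ne' hp.ne', Real.log_div hp.ne' hm.ne',
      Real.log_div hp2.ne' hm2.ne']
    have e3 : (1:ℝ) / 2 + lam = (1 + 2 * lam) / 2 := by ring
    have e4 : (1:ℝ) / 2 - lam = (1 - 2 * lam) / 2 := by ring
    rw [e3, e4, Real.log_div hp2.ne' two_ne_zero, Real.log_div hm2.ne' two_ne_zero]
    ring
  · rw [if_pos rfl, div_self hm.ne', div_self (by linarith : (1:ℝ) - (1/2 - lam) ≠ 0)]
    simp

/-- Discordance predicate on ordered pairs. -/
def Disc (n : ℕ) (π σ : Equiv.Perm (Fin n)) (q : Fin n × Fin n) : Prop :=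
  (σ q.1 < σ q.2 ∧ π q.2 < π q.1) ∨ (σ q.2 < σ q.1 ∧ π q.1 < π q.2)

instance (n : ℕ) (π σ : Equiv.Perm (Fin n)) : DecidablePred (Disc n π σ) :=
  fun q => inferInstanceAs (Decidable (_ ∨ _))

lemma card_disc (n : ℕ) (π σ : Equiv.Perm (Fin n)) :
    ((Finset.univ : Finset (Pairs n)).filter fun p => Disc n π σ p.1).card = dKT n π σ := by
  rw [dKT]
  apply Finset.card_bij (fun p _ => if σ p.1.1 < σ p.1.2 then p.1 else p.1.swap)
  · intro p hp
    obtain ⟨-, hd⟩ := Finset.mem_filter.mp hp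
    rcases hd with ⟨h1, h2⟩ | ⟨h1, h2⟩
    · rw [if_pos h1]
      exact Finset.mem_filter.mpr ⟨Finset.mem_univ _, h1, h2⟩
    · rw [if_neg (not_lt_of_gt h1)]
      exact Finset.mem_filter.mpr ⟨Finset.mem_univ _, h1, h2⟩
  · intro p hp p' hp' h
    have hij := p.2
    have hij' := p'.2
    apply Subtype.ext
    split_ifs at h with h1 h2 h2
    · exact h
    · exfalso
      have : p.1.1 = p'.1.2 := congrArg Prod.fst h
      have h2' : p.1.2 = p'.1.1 := congrArg Prod.snd h
      omega
    · exfalso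
      have : p.1.2 = p'.1.1 := congrArg Prod.fst h
      have h2' : p.1.1 = p'.1.2 := congrArg Prod.snd h
      omega
    · have e1 : p.1.2 = p'.1.2 := congrArg Prod.fst h
      have e2 : p.1.1 = p'.1.1 := congrArg Prod.snd h
      exact Prod.ext e2 e1
  · intro q hq
    obtain ⟨-, h1, h2⟩ := Finset.mem_filter.mp hq
    have hne : q.1 ≠ q.2 := fun he => absurd (congrArg σ he) (ne_of_lt h1)
    rcases hne.lt_or_gt with hlt | hlt
    · refine ⟨⟨q, hlt⟩, Finset.mem_filter.mpr ⟨Finset.mem_univ _, Or.inl ⟨h1, h2⟩⟩, ?_⟩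
      simp [if_pos h1]
    · refine ⟨⟨q.swap, hlt⟩, Finset.mem_filter.mpr ⟨Finset.mem_univ _,
        Or.inr ⟨h1, h2⟩⟩, ?_⟩
      simp [if_neg (not_lt_of_gt h1)]

lemma Q1_pos (n : ℕ) (hn : 2 ≤ n) (lam : ℝ) (h0 : 0 < lam) (h : lam < 1 / 2)
    (πs : Equiv.Perm (Fin n)) (x : Pairs n × Bool) : 0 < Q1 n (Mstar n lam) πs x := by
  have hc : (0:ℝ) < (n.choose 2 : ℝ)⁻¹ := by
    have := Nat.choose_pos (show 2 ≤ n from hn)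
    positivity
  have hij := x.1.2
  have hne : πs x.1.1.1 ≠ πs x.1.1.2 := fun he => absurd (πs.injective he) (ne_of_lt hij)
  rcases hne.lt_or_gt with hlt | hlt
  · rw [Q1]
    rcases x.2 with _ | _ <;>
      simp only [Bool.false_eq_true, if_false, if_true, Mstar_gt _ _ _ _ hlt] <;>
      apply mul_pos hc <;> linarith
  · rw [Q1]
    rcases x.2 with _ | _ <;>
      simp only [Bool.false_eq_true, if_false, if_true, Mstar_lt _ _ _ _ hlt] <;>
      apply mul_pos hc <;> linarith

lemma Q1_sum (n : ℕ) (hn : 2 ≤ n) (lam : ℝ) (πs : Equiv.Perm (Fin n)) :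
    ∑ x : Pairs n × Bool, Q1 n (Mstar n lam) πs x = 1 := by
  rw [Fintype.sum_prod_type]
  have h1 : ∀ p : Pairs n, ∑ b : Bool, Q1 n (Mstar n lam) πs (p, b) = (n.choose 2 : ℝ)⁻¹ := by
    intro p
    rw [Fintype.sum_bool]
    simp only [Q1, if_true, Bool.false_eq_true, if_false]
    ring
  rw [Finset.sum_congr rfl fun p _ => h1 p]
  rw [Finset.sum_const, Finset.card_univ]
  have hcard : Fintype.card (Pairs n) = n.choose 2 := by
    rw [Fintype.card_subtype]
    exact card_lt_pairs n
  rw [hcard, nsmul_eq_mul]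
  rw [mul_inv_cancel₀]
  exact_mod_cast (Nat.choose_pos hn).ne'

lemma klFin_single (n : ℕ) (hn : 2 ≤ n) (π σ : Equiv.Perm (Fin n)) (lam : ℝ)
    (h0 : 0 < lam) (h : lam < 1 / 2) :
    klFin (Q1 n (Mstar n lam) π) (Q1 n (Mstar n lam) σ)
      = (dKT n π σ : ℝ) * (n.choose 2 : ℝ)⁻¹ *
          (2 * lam * Real.log ((1 + 2 * lam) / (1 - 2 * lam))) := by
  have hc : (0:ℝ) < (n.choose 2 : ℝ)⁻¹ := by
    have := Nat.choose_pos (show 2 ≤ n from hn)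
    positivity
  set c : ℝ := (n.choose 2 : ℝ)⁻¹ with hcdef
  set K : ℝ := 2 * lam * Real.log ((1 + 2 * lam) / (1 - 2 * lam)) with hKdef
  rw [klFin, Fintype.sum_prod_type]
  have hterm : ∀ p : Pairs n,
      (∑ b : Bool, Q1 n (Mstar n lam) π (p, b) *
        Real.log (Q1 n (Mstar n lam) π (p, b) / Q1 n (Mstar n lam) σ (p, b)))
      = if Disc n π σ p.1 then c * K else 0 := by
    intro p
    have hij := p.2
    have hπne : π p.1.1 ≠ π p.1.2 := fun he => absurd (π.injective he) (ne_of_lt hij)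
    have hσne : σ p.1.1 ≠ σ p.1.2 := fun he => absurd (σ.injective he) (ne_of_lt hij)
    rw [Fintype.sum_bool]
    simp only [Q1, if_true, Bool.false_eq_true, if_false]
    set a : ℝ := Mstar n lam (π p.1.1) (π p.1.2) with hadef
    set b : ℝ := Mstar n lam (σ p.1.1) (σ p.1.2) with hbdef
    rw [mul_div_mul_left _ _ hc.ne', mul_div_mul_left _ _ hc.ne']
    have ha : a = 1 / 2 + lam ∨ a = 1 / 2 - lam := by
      rcases hπne.lt_or_gt with hlt | hlt
      · exact Or.inr (Mstar_gt n lam _ _ hlt)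
      · exact Or.inl (Mstar_lt n lam _ _ hlt)
    have hb : b = 1 / 2 + lam ∨ b = 1 / 2 - lam := by
      rcases hσne.lt_or_gt with hlt | hlt
      · exact Or.inr (Mstar_gt n lam _ _ hlt)
      · exact Or.inl (Mstar_lt n lam _ _ hlt)
    have key := two_point_kl lam a b h0 h ha hb
    have lhs_eq : c * a * Real.log (a / b) + c * (1 - a) * Real.log ((1 - a) / (1 - b))
        = c * (a * Real.log (a / b) + (1 - a) * Real.log ((1 - a) / (1 - b))) := by ring
    rw [lhs_eq, key]
    have hiff : a = b ↔ ¬ Disc n π σ p.1 := by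
      have hnelam : (1:ℝ) / 2 + lam ≠ 1 / 2 - lam := by intro he; linarith
      rcases hπne.lt_or_gt with hπ | hπ <;> rcases hσne.lt_or_gt with hσ | hσ
      · rw [hadef, hbdef, Mstar_gt n lam _ _ hπ, Mstar_gt n lam _ _ hσ]
        simp only [iff_true_intro rfl, true_iff]
        rintro (⟨h1, h2⟩ | ⟨h1, h2⟩)
        · exact absurd h2 (not_lt_of_gt hπ)
        · exact absurd h1 (not_lt_of_gt hσ)
      · rw [hadef, hbdef, Mstar_gt n lam _ _ hπ, Mstar_lt n lam _ _ hσ]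
        constructor
        · intro he; exact absurd he.symm hnelam
        · intro hnd; exact absurd (Or.inr ⟨hσ, hπ⟩) hnd
      · rw [hadef, hbdef, Mstar_lt n lam _ _ hπ, Mstar_gt n lam _ _ hσ]
        constructor
        · intro he; exact absurd he hnelam
        · intro hnd; exact absurd (Or.inl ⟨hσ, hπ⟩) hnd
      · rw [hadef, hbdef, Mstar_lt n lam _ _ hπ, Mstar_lt n lam _ _ hσ]
        simp only [iff_true_intro rfl, true_iff]
        rintro (⟨h1, h2⟩ | ⟨h1, h2⟩)
        · exact absurd h1 (not_lt_of_gt hσ)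
        · exact absurd h2 (not_lt_of_gt hπ)
    by_cases hab : a = b
    · rw [if_pos hab, if_neg (hiff.mp hab), mul_zero]
    · rw [if_neg hab]
      have : Disc n π σ p.1 := by
        by_contra hnd
        exact hab (hiff.mpr hnd)
      rw [if_pos this]
  rw [Finset.sum_congr rfl fun p _ => hterm p]
  rw [← Finset.sum_filter, Finset.sum_const, card_disc, nsmul_eq_mul]
  ring

/-- **Lemma 4, model (O2).**  For the noisy sorting model with matrix `M*_n(λ)` under
sampling model (O2) with `N` i.i.d. comparisons,
`KL(P_π ‖ P_σ) = 2 d_KT(π,σ) N (n choose 2)⁻¹ λ log((1+2λ)/(1-2λ))`. -/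
theorem kl_noisy_sorting_O2 (n N : ℕ) (π σ : Equiv.Perm (Fin n)) (lam : ℝ)
    (hlam0 : 0 < lam) (hlam : lam < 1 / 2) :
    klFin (prob2 n N (Mstar n lam) π) (prob2 n N (Mstar n lam) σ) =
      2 * (dKT n π σ : ℝ) * (N : ℝ) * (n.choose 2 : ℝ)⁻¹ * lam *
        Real.log ((1 + 2 * lam) / (1 - 2 * lam)) := by
  by_cases hn : 2 ≤ n
  · have hpe : prob2 n N (Mstar n lam) π = fun ω => ∏ t : Fin N, Q1 n (Mstar n lam) π (ω t) :=
      funext fun ω => prob2_eq_prod n N _ π ω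
    have hse : prob2 n N (Mstar n lam) σ = fun ω => ∏ t : Fin N, Q1 n (Mstar n lam) σ (ω t) :=
      funext fun ω => prob2_eq_prod n N _ σ ω
    rw [hpe, hse,
      klFin_pi_s10 _ _ (Q1_pos n hn lam hlam0 hlam π) (Q1_pos n hn lam hlam0 hlam σ)
        (Q1_sum n hn lam π) N,
      klFin_single n hn π σ lam hlam0 hlam]
    ring
  · -- degenerate case `n ≤ 1`: then `π = σ` and both sides vanish
    have hsub : Subsingleton (Fin n) := by
      interval_cases n <;> infer_instance
    have hπσ : π = σ := Equiv.ext fun i => Subsingleton.elim _ _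
    subst hπσ
    have hd : dKT n π π = 0 := by
      rw [dKT, Finset.card_eq_zero, Finset.filter_eq_empty_iff]
      rintro q - ⟨h1, h2⟩
      exact absurd h2 (not_lt_of_gt h1)
    have hkl : klFin (prob2 n N (Mstar n lam) π) (prob2 n N (Mstar n lam) π) = 0 := by
      rw [klFin]
      apply Finset.sum_eq_zero
      intro ω _
      by_cases hω : prob2 n N (Mstar n lam) π ω = 0
      · rw [hω, zero_mul]
      · rw [div_self hω, Real.log_one, mul_zero]
    rw [hkl, hd]
    push_cast
    ring
end
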